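/- arXiv:2312.05498 — 4 statements merged into one kernel-verified Lean document; each statement's English description precedes it below -/
import Mathlib

section
/- Let 1 < q < p and β ∈ (0, 1/(p-1)). With A_β = G/(p(β+1)^q) where G = q(p-1)(β+1) - p(q-1), the function h_β(y) = y^{p-q} - A_β y^p is strictly decreasing on [1, ∞). -/
open Real Set

lemma key_ineq (p q t : ℝ) (hq : 1 < q) (hpq : q < p) (ht1 : 1 < t)
    (ht2 : (p - 1) * t < p) :
    (p - q) * t ^ q ≤ q * (p - 1) * t - p * (q - 1) := by
  have ht0 : (0:ℝ) < t := by linarith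
  set φ : ℝ → ℝ := fun s => q * (p - 1) * s ^ (1 - q) - p * (q - 1) * s ^ (-q) with hφ
  have hder : ∀ s ∈ Ioo (1:ℝ) t, HasDerivAt φ
      (q * (p - 1) * ((1 - q) * s ^ (1 - q - 1)) - p * (q - 1) * (-q * s ^ (-q - 1))) s := by
    intro s hs
    have hs0 : s ≠ 0 := by have := hs.1; positivity
    exact ((Real.hasDerivAt_rpow_const (Or.inl hs0)).const_mul (q * (p - 1))).sub
      ((Real.hasDerivAt_rpow_const (Or.inl hs0)).const_mul (p * (q - 1)))
  have hmono : MonotoneOn φ (Icc 1 t) := by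
    apply monotoneOn_of_deriv_nonneg (convex_Icc 1 t)
    · apply ContinuousOn.sub
      · exact continuousOn_const.mul (continuousOn_id.rpow_const
          (fun x (hx : x ∈ Icc (1:ℝ) t) => Or.inl (by have := hx.1; positivity)))
      · exact continuousOn_const.mul (continuousOn_id.rpow_const
          (fun x (hx : x ∈ Icc (1:ℝ) t) => Or.inl (by have := hx.1; positivity)))
    · rw [interior_Icc]
      intro s hs
      exact (hder s hs).differentiableAt.differentiableWithinAt
    · rw [interior_Icc]
      intro s hs
      rw [(hder s hs).deriv]
      have hs1 : (1:ℝ) < s := hs.1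
      have hs0 : (0:ℝ) < s := by linarith
      have e1 : s ^ (1 - q - 1) = s ^ (-q) := by norm_num
      have e2 : s ^ (-q) = s * s ^ (-q - 1) := by
        nth_rewrite 1 [show (-q) = 1 + (-q - 1) by ring]
        rw [Real.rpow_add hs0, Real.rpow_one]
      have key : q * (p - 1) * ((1 - q) * (s * s ^ (-q - 1))) - p * (q - 1) * (-q * s ^ (-q - 1))
          = q * (q - 1) * s ^ (-q - 1) * (p - (p - 1) * s) := by ring
      rw [e1, e2, key]
      have hpos : (0:ℝ) ≤ s ^ (-q - 1) := (Real.rpow_pos_of_pos hs0 _).le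
      have hps : (0:ℝ) ≤ p - (p - 1) * s := by nlinarith [hs.2]
      have : (0:ℝ) ≤ q * (q - 1) := by nlinarith
      exact mul_nonneg (mul_nonneg this hpos) hps
  have h1 : φ 1 ≤ φ t := hmono (left_mem_Icc.2 ht1.le) (right_mem_Icc.2 ht1.le) ht1.le
  have hφ1 : φ 1 = p - q := by simp [hφ]; ring
  have htq : (0:ℝ) < t ^ q := Real.rpow_pos_of_pos ht0 _
  have e3 : t ^ (1 - q) * t ^ q = t := by
    rw [← Real.rpow_add ht0, show 1 - q + q = 1 by ring, Real.rpow_one]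
  have e4 : t ^ (-q) * t ^ q = 1 := by
    rw [← Real.rpow_add ht0, show -q + q = 0 by ring, Real.rpow_zero]
  have hmul : φ t * t ^ q = q * (p - 1) * t - p * (q - 1) := by
    simp only [hφ]
    calc (q * (p - 1) * t ^ (1 - q) - p * (q - 1) * t ^ (-q)) * t ^ q
        = q * (p - 1) * (t ^ (1 - q) * t ^ q) - p * (q - 1) * (t ^ (-q) * t ^ q) := by ring
      _ = _ := by rw [e3, e4]; ring
  calc (p - q) * t ^ q ≤ φ t * t ^ q := by
        rw [hφ1] at h1; exact mul_le_mul_of_nonneg_right h1 htq.le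
    _ = _ := hmul

theorem stmt3 (p q β : ℝ) (hq : 1 < q) (hpq : q < p) (hβ : β ∈ Ioo 0 (1 / (p - 1))) :
    StrictAntiOn
      (fun y : ℝ => y ^ (p - q) - (q * (p - 1) * (β + 1) - p * (q - 1)) / (p * (β + 1) ^ q) * y ^ p)
      (Ici 1) := by
  have hp1 : (0:ℝ) < p - 1 := by linarith
  have ht1 : (1:ℝ) < β + 1 := by linarith [hβ.1]
  have ht0 : (0:ℝ) < β + 1 := by linarith
  have ht2 : (p - 1) * (β + 1) < p := by
    have := hβ.2
    rw [lt_div_iff₀ hp1] at this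
    nlinarith
  have hkey := key_ineq p q (β + 1) hq hpq ht1 ht2
  set A : ℝ := (q * (p - 1) * (β + 1) - p * (q - 1)) / (p * (β + 1) ^ q) with hA
  have htq : (0:ℝ) < (β + 1) ^ q := Real.rpow_pos_of_pos ht0 _
  have hp0 : (0:ℝ) < p := by linarith
  have hAp : p - q ≤ A * p := by
    rw [hA, div_mul_eq_mul_div, le_div_iff₀ (by positivity)]
    calc (p - q) * (p * (β + 1) ^ q) = ((p - q) * (β + 1) ^ q) * p := by ring
      _ ≤ (q * (p - 1) * (β + 1) - p * (q - 1)) * p :=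
          mul_le_mul_of_nonneg_right hkey hp0.le
  apply strictAntiOn_of_deriv_neg (convex_Ici 1)
  · apply ContinuousOn.sub
    · exact continuousOn_id.rpow_const
        (fun x (hx : x ∈ Ici (1:ℝ)) => Or.inl (by have : (1:ℝ) ≤ x := hx; positivity))
    · exact continuousOn_const.mul (continuousOn_id.rpow_const
        (fun x (hx : x ∈ Ici (1:ℝ)) => Or.inl (by have : (1:ℝ) ≤ x := hx; positivity)))
  · rw [interior_Ici]
    intro y hy
    have hy1 : (1:ℝ) < y := hy
    have hy0 : y ≠ 0 := by positivity
    have hD : HasDerivAt (fun y : ℝ => y ^ (p - q) - A * y ^ p)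
        ((p - q) * y ^ (p - q - 1) - A * (p * y ^ (p - 1))) y :=
      (Real.hasDerivAt_rpow_const (Or.inl hy0)).sub
        ((Real.hasDerivAt_rpow_const (Or.inl hy0)).const_mul A)
    rw [hD.deriv]
    have hexp : y ^ (p - q - 1) < y ^ (p - 1) := by
      apply Real.rpow_lt_rpow_of_exponent_lt hy1
      linarith
    have h1 : (p - q) * y ^ (p - q - 1) < (p - q) * y ^ (p - 1) :=
      mul_lt_mul_of_pos_left hexp (by linarith)
    have h2 : (p - q) * y ^ (p - 1) ≤ A * (p * y ^ (p - 1)) := by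
      have hyp : (0:ℝ) < y ^ (p - 1) := Real.rpow_pos_of_pos (by linarith) _
      calc (p - q) * y ^ (p - 1) ≤ (A * p) * y ^ (p - 1) :=
            mul_le_mul_of_nonneg_right hAp hyp.le
        _ = A * (p * y ^ (p - 1)) := by ring
    linarith
end

section
/- Let 1 < q < p, s₁ ∈ (0,1], and β ∈ (0, 1/(p-1)). Then (q/p) · s₁/(β+1)^{q-1} ≤ ω_p(s₁)^{p-q} - G(β)/(p(β+1)^q) · ω_p(s₁)^p, with equality if and only if β = ω_p(s₁) - 1. -/
/-!
Writing `x = β + 1` and eliminating `s₁` through `H_p(ω) = s₁`, the difference of the two sides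
is `ω^p / x^q · (u^q - q u + (q - 1))` with `u = x / ω`. The second factor is nonnegative by
Bernoulli's inequality and vanishes only at `u = 1`, i.e. at `β = ω - 1`.
-/

open Real Set

namespace Real

theorem rpow_sub_mul_add_sub_one_nonneg {q u : ℝ} (hq : 1 ≤ q) (hu : 0 ≤ u) :
    0 ≤ u ^ q - q * u + (q - 1) := by
  have h := one_add_mul_self_le_rpow_one_add (by linarith : (-1 : ℝ) ≤ u - 1) hq
  rw [add_sub_cancel] at h
  linarith

theorem rpow_sub_mul_add_sub_one_pos {q u : ℝ} (hq : 1 < q) (hu : 0 ≤ u) (hu1 : u ≠ 1) :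
    0 < u ^ q - q * u + (q - 1) := by
  have h := one_add_mul_self_lt_rpow_one_add (by linarith : (-1 : ℝ) ≤ u - 1)
    (sub_ne_zero.mpr hu1) hq
  rw [add_sub_cancel] at h
  linarith

theorem rpow_sub_mul_add_sub_one_eq_zero_iff {q u : ℝ} (hq : 1 < q) (hu : 0 ≤ u) :
    u ^ q - q * u + (q - 1) = 0 ↔ u = 1 := by
  refine ⟨fun h => ?_, fun h => by simp [h]⟩
  by_contra hu1
  exact (rpow_sub_mul_add_sub_one_pos hq hu hu1).ne' h

end Real

theorem sub_eq_mul_rpow_sub_mul_add_sub_one {p q x w : ℝ} (hp : p ≠ 0) (hx : 0 < x) (hw : 0 < w) :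
    w ^ (p - q) - (q * (p - 1) * x - p * (q - 1)) / (p * x ^ q) * w ^ p
        - q / p * (-(p - 1) * w ^ p + p * w ^ (p - 1)) / x ^ (q - 1)
      = w ^ p / x ^ q * ((x / w) ^ q - q * (x / w) + (q - 1)) := by
  have hxq : 0 < x ^ q := rpow_pos_of_pos hx q
  have hwq : 0 < w ^ q := rpow_pos_of_pos hw q
  rw [rpow_sub hw, rpow_sub_one hw.ne', rpow_sub_one hx.ne', div_rpow hx.le hw.le]
  field_simp
  ring

theorem stmt6_general (p q s₁ β w : ℝ) (hq : 1 < q) (hpq : q < p)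
    (hβ : β ∈ Ioo 0 (1 / (p - 1)))
    (hw : w ∈ Icc 1 (p / (p - 1))) (hws : -(p - 1) * w ^ p + p * w ^ (p - 1) = s₁) :
    q / p * s₁ / (β + 1) ^ (q - 1)
      ≤ w ^ (p - q) - (q * (p - 1) * (β + 1) - p * (q - 1)) / (p * (β + 1) ^ q) * w ^ p ∧
    (q / p * s₁ / (β + 1) ^ (q - 1)
      = w ^ (p - q) - (q * (p - 1) * (β + 1) - p * (q - 1)) / (p * (β + 1) ^ q) * w ^ p
      ↔ β = w - 1) := by
  subst hws
  have hp : p ≠ 0 := by linarith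
  have hw0 : 0 < w := by linarith [hw.1]
  have hx : 0 < β + 1 := by linarith [hβ.1]
  have hu : 0 ≤ (β + 1) / w := by positivity
  have hc : 0 < w ^ p / (β + 1) ^ q := by positivity
  refine ⟨?_, ?_⟩
  · rw [← sub_nonneg, sub_eq_mul_rpow_sub_mul_add_sub_one hp hx hw0]
    exact mul_nonneg hc.le (rpow_sub_mul_add_sub_one_nonneg hq.le hu)
  · rw [eq_comm, ← sub_eq_zero, sub_eq_mul_rpow_sub_mul_add_sub_one hp hx hw0,
      mul_eq_zero, or_iff_right hc.ne', rpow_sub_mul_add_sub_one_eq_zero_iff hq hu,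
      div_eq_one_iff_eq hw0.ne', eq_sub_iff_add_eq]

/-- `w` plays the role of `ω_p(s₁)`. -/
theorem stmt6 (p q s₁ β w : ℝ) (hq : 1 < q) (hpq : q < p) (hs₁ : s₁ ∈ Ioc (0 : ℝ) 1)
    (hβ : β ∈ Ioo 0 (1 / (p - 1)))
    (hw : w ∈ Icc 1 (p / (p - 1))) (hws : -(p - 1) * w ^ p + p * w ^ (p - 1) = s₁) :
    q / p * s₁ / (β + 1) ^ (q - 1)
      ≤ w ^ (p - q) - (q * (p - 1) * (β + 1) - p * (q - 1)) / (p * (β + 1) ^ q) * w ^ p ∧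
    (q / p * s₁ / (β + 1) ^ (q - 1)
      = w ^ (p - q) - (q * (p - 1) * (β + 1) - p * (q - 1)) / (p * (β + 1) ^ q) * w ^ p
      ↔ β = w - 1) :=
  stmt6_general p q s₁ β w hq hpq hβ hw hws
end

section
/- Let 1 < q < p, and let s₁, s₂ ∈ (0, 1] satisfy s₁^{q-1} ≤ s₂^{p-1} and s₁/s₂ < t^{p-q} for the relevant range; then the function τ(t) = ((p-q)/p)·(t^p - s₁)/(t^{p-q} - s₁/s₂) is strictly increasing on (1, ∞). More precisely, μ(t) := q t^p - p(s₁/s₂) t^q + (p-q)s₁ > 0 for all t > 1, and τ'(t) has the same sign as μ(t) wherever the denominator is nonzero. -/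
open Real Set

/-- Strict two-point weighted AM-GM. -/
lemma amgm2' {A B w : ℝ} (hA : 0 < A) (hB : 0 < B) (hAB : A ≠ B) (hw0 : 0 < w) (hw1 : w < 1) :
    A ^ w * B ^ (1 - w) < w * A + (1 - w) * B := by
  have hABd : A / B - 1 ≠ 0 :=
    sub_ne_zero.mpr fun hE => hAB ((div_eq_one_iff_eq hB.ne').mp hE)
  have key := _root_.rpow_one_add_lt_one_add_mul_self (s := A / B - 1)
    (by have := div_pos hA hB; linarith) hABd hw0 hw1
  rw [add_sub_cancel] at key
  have h1 : A ^ w * B ^ (1 - w) = (A / B) ^ w * B := by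
    rw [Real.div_rpow hA.le hB.le, Real.rpow_sub hB, Real.rpow_one]
    field_simp
  have h2 : (1 + w * (A / B - 1)) * B = w * A + (1 - w) * B := by
    field_simp; ring
  rw [h1]
  calc (A / B) ^ w * B < (1 + w * (A / B - 1)) * B := by
        exact mul_lt_mul_of_pos_right key hB
    _ = w * A + (1 - w) * B := h2

theorem stmt15 (p q s₁ s₂ : ℝ) (hq : 1 < q) (hpq : q < p)
    (hs₁ : s₁ ∈ Ioc (0 : ℝ) 1) (hs₂ : s₂ ∈ Ioc (0 : ℝ) 1)
    (h : s₁ ^ (q - 1) ≤ s₂ ^ (p - 1)) :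
    (∀ t : ℝ, 1 < t → 0 < q * t ^ p - p * (s₁ / s₂) * t ^ q + (p - q) * s₁) ∧
    StrictMonoOn (fun t : ℝ => (p - q) / p * ((t ^ p - s₁) / (t ^ (p - q) - s₁ / s₂)))
      (Ioi 1) ∧
    (∀ t : ℝ, 1 < t → t ^ (p - q) - s₁ / s₂ ≠ 0 →
      Real.sign (deriv (fun t : ℝ => (p - q) / p * ((t ^ p - s₁) / (t ^ (p - q) - s₁ / s₂))) t)
        = Real.sign (q * t ^ p - p * (s₁ / s₂) * t ^ q + (p - q) * s₁)) := by
  obtain ⟨hs₁0, hs₁1⟩ := hs₁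
  obtain ⟨hs₂0, hs₂1⟩ := hs₂
  have hq0 : (0:ℝ) < q := lt_trans one_pos hq
  have hp1 : 1 < p := hq.trans hpq
  have hp0 : (0:ℝ) < p := lt_trans one_pos hp1
  have hpq0 : 0 < p - q := sub_pos.mpr hpq
  have hw0 : 0 < q / p := div_pos hq0 hp0
  have hw1 : q / p < 1 := (div_lt_one hp0).mpr hpq
  -- step 1 : s₁ ^ (q/p) ≤ s₂
  have step1 : s₁ ^ (q / p) ≤ s₂ := by
    have hA : s₁ ^ (q * (p - 1) / p) ≤ s₁ ^ (q - 1) :=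
      Real.rpow_le_rpow_of_exponent_ge hs₁0 hs₁1
        (by rw [le_div_iff₀ hp0]; nlinarith)
    have hB : s₁ ^ (q * (p - 1) / p) = (s₁ ^ (q / p)) ^ (p - 1) := by
      rw [← Real.rpow_mul hs₁0.le]; ring_nf
    have hC : (s₁ ^ (q / p)) ^ (p - 1) ≤ s₂ ^ (p - 1) := hB ▸ hA.trans h
    exact (Real.rpow_le_rpow_iff (Real.rpow_nonneg hs₁0.le _) hs₂0.le (by linarith)).mp hC
  have hsq0 : 0 < s₁ ^ (q / p) := Real.rpow_pos_of_pos hs₁0 _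
  -- key bound on c := s₁/s₂
  have hckey : s₁ / s₂ ≤ s₁ ^ ((p - q) / p) := by
    have h1 : s₁ / s₂ ≤ s₁ / s₁ ^ (q / p) := by gcongr
    have h2 : s₁ / s₁ ^ (q / p) = s₁ ^ ((p - q) / p) := by
      have he : (p - q) / p = 1 - q / p := by field_simp
      rw [he, Real.rpow_sub hs₁0, Real.rpow_one]
    linarith [h1, h2.le, h2.ge]
  have hc1 : s₁ / s₂ ≤ 1 :=
    hckey.trans (Real.rpow_le_one hs₁0.le hs₁1 (by positivity))
  have hc0 : 0 < s₁ / s₂ := div_pos hs₁0 hs₂0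
  -- μ positivity
  have hμ : ∀ t : ℝ, 1 < t → 0 < q * t ^ p - p * (s₁ / s₂) * t ^ q + (p - q) * s₁ := by
    intro t ht
    have ht0 : (0:ℝ) < t := lt_trans one_pos ht
    have htp : 1 < t ^ p := (Real.one_lt_rpow_iff_of_pos ht0).mpr (Or.inl ⟨ht, hp0⟩)
    have hAB : t ^ p ≠ s₁ := by intro hE; rw [hE] at htp; linarith
    have key := amgm2' (Real.rpow_pos_of_pos ht0 p) hs₁0 hAB hw0 hw1
    have e3 : (t ^ p) ^ (q / p) = t ^ q := by
      rw [← Real.rpow_mul ht0.le]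
      congr 1; field_simp
    have e4 : 1 - q / p = (p - q) / p := by field_simp
    rw [e3, e4] at key
    have htq : 0 < t ^ q := Real.rpow_pos_of_pos ht0 q
    have h5 : (s₁ / s₂) * t ^ q ≤ s₁ ^ ((p - q) / p) * t ^ q :=
      mul_le_mul_of_nonneg_right hckey htq.le
    have key' := mul_lt_mul_of_pos_left key hp0
    have e5 : p * (q / p * t ^ p + (p - q) / p * s₁) = q * t ^ p + (p - q) * s₁ := by
      field_simp
    rw [e5] at key'
    nlinarith [key', h5]
  -- derivative data
  have hder : ∀ x : ℝ, 1 < x →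
      HasDerivAt (fun t : ℝ => (p - q) / p * ((t ^ p - s₁) / (t ^ (p - q) - s₁ / s₂)))
        ((p - q) / p * ((p * x ^ (p - 1) * (x ^ (p - q) - s₁ / s₂)
          - (x ^ p - s₁) * ((p - q) * x ^ (p - q - 1))) / (x ^ (p - q) - s₁ / s₂) ^ 2)) x := by
    intro x hx
    have hx0 : (0:ℝ) < x := lt_trans one_pos hx
    have hN : HasDerivAt (fun t : ℝ => t ^ p - s₁) (p * x ^ (p - 1)) x :=
      (Real.hasDerivAt_rpow_const (Or.inl hx0.ne')).sub_const s₁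
    have hD : HasDerivAt (fun t : ℝ => t ^ (p - q) - s₁ / s₂) ((p - q) * x ^ (p - q - 1)) x :=
      (Real.hasDerivAt_rpow_const (Or.inl hx0.ne')).sub_const _
    have hDne : x ^ (p - q) - s₁ / s₂ ≠ 0 := by
      have : 1 < x ^ (p - q) := (Real.one_lt_rpow_iff_of_pos hx0).mpr (Or.inl ⟨hx, hpq0⟩)
      intro hE; nlinarith
    exact (hN.div hD hDne).const_mul _
  have hval : ∀ x : ℝ, 1 < x →
      (p * x ^ (p - 1) * (x ^ (p - q) - s₁ / s₂) - (x ^ p - s₁) * ((p - q) * x ^ (p - q - 1)))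
        = x ^ (p - q - 1) * (q * x ^ p - p * (s₁ / s₂) * x ^ q + (p - q) * s₁) := by
    intro x hx
    have hx0 : (0:ℝ) < x := lt_trans one_pos hx
    have e1 : x ^ (p - 1) = x ^ (p - q - 1) * x ^ q := by
      rw [← Real.rpow_add hx0]; ring_nf
    have e2 : x ^ (p - 1) * x ^ (p - q) = x ^ (p - q - 1) * x ^ p := by
      rw [← Real.rpow_add hx0, ← Real.rpow_add hx0]; ring_nf
    linear_combination p * e2 - p * (s₁ / s₂) * e1
  have hpos : ∀ x : ℝ, 1 < x →
      0 < (p - q) / p * ((p * x ^ (p - 1) * (x ^ (p - q) - s₁ / s₂)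
        - (x ^ p - s₁) * ((p - q) * x ^ (p - q - 1))) / (x ^ (p - q) - s₁ / s₂) ^ 2) := by
    intro x hx
    have hx0 : (0:ℝ) < x := lt_trans one_pos hx
    have hDpos : 0 < x ^ (p - q) - s₁ / s₂ := by
      have : 1 < x ^ (p - q) := (Real.one_lt_rpow_iff_of_pos hx0).mpr (Or.inl ⟨hx, hpq0⟩)
      linarith
    rw [hval x hx]
    have := hμ x hx
    have hxpow : 0 < x ^ (p - q - 1) := Real.rpow_pos_of_pos hx0 _
    positivity
  refine ⟨hμ, ?_, ?_⟩
  · -- strict monotonicity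
    apply strictMonoOn_of_deriv_pos (convex_Ioi (1:ℝ))
    · intro x hx
      exact ((hder x hx).differentiableAt).continuousAt.continuousWithinAt
    · intro x hx
      rw [interior_Ioi] at hx
      rw [(hder x hx).deriv]
      exact hpos x hx
  · intro t ht _
    rw [(hder t ht).deriv, Real.sign_of_pos (hpos t ht), Real.sign_of_pos (hμ t ht)]
end

section
/- Let q > 1. The function α(s) = ω_q(s)^q / s - 1 is strictly decreasing on (0, 1], with α(1) = 0; in particular α(s) > 0 for all s ∈ (0,1). -/
open Real Set

/-!
Since `H_q(z) = z^(q-1) (q - (q-1) z)`, the identity `H_q(ω_q(s)) = s` turns `α` into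
`α(s) = g(ω_q(s)) - 1` with the Möbius map `g(z) = z / (q - (q-1) z)`, which is increasing where
its denominator is positive. As `H_q' (z) = q (q-1) z^(q-2) (1 - z) < 0` for `z > 1`, `ω_q` is
decreasing, hence so is `α`; and `ω_q(1) = 1` gives `α(1) = 0`.
-/

noncomputable def Hq (q z : ℝ) : ℝ := -(q - 1) * z ^ q + q * z ^ (q - 1)

section Hq

variable {q z : ℝ}

lemma Hq_one : Hq q 1 = 1 := by
  simp [Hq]

lemma Hq_eq_rpow_mul (hz : 0 < z) : Hq q z = z ^ (q - 1) * (q - (q - 1) * z) := by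
  have hpow : z ^ q = z ^ (q - 1) * z := by
    rw [← rpow_add_one hz.ne', sub_add_cancel]
  rw [Hq, hpow]
  ring

lemma rpow_div_Hq (hz : 0 < z) : z ^ q / Hq q z = z / (q - (q - 1) * z) := by
  rw [Hq_eq_rpow_mul hz, ← mul_div_mul_left z _ (rpow_pos_of_pos hz (q - 1)).ne',
    ← rpow_add_one hz.ne', sub_add_cancel]

lemma hasDerivAt_Hq (hz : 0 < z) :
    HasDerivAt (Hq q) (q * (q - 1) * (z ^ (q - 2) - z ^ (q - 1))) z := by
  have h := ((hasDerivAt_rpow_const (p := q) (Or.inl hz.ne')).const_mul (-(q - 1))).add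
    ((hasDerivAt_rpow_const (p := q - 1) (Or.inl hz.ne')).const_mul q)
  refine h.congr_deriv ?_
  rw [show q - 1 - 1 = q - 2 by ring]
  ring

lemma strictAntiOn_Hq (hq : 1 < q) : StrictAntiOn (Hq q) (Ici 1) := by
  apply strictAntiOn_of_deriv_neg (convex_Ici 1)
  · exact fun z hz => (hasDerivAt_Hq (zero_lt_one.trans_le hz)).continuousAt.continuousWithinAt
  · intro z hz
    rw [interior_Ici] at hz
    rw [(hasDerivAt_Hq (zero_lt_one.trans hz)).deriv]
    have hlt : z ^ (q - 2) < z ^ (q - 1) := rpow_lt_rpow_of_exponent_lt hz (by linarith)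
    exact mul_neg_of_pos_of_neg (by nlinarith) (by linarith)

end Hq

lemma strictMonoOn_div_sub_mul {a b : ℝ} (ha : 0 < a) :
    StrictMonoOn (fun z => z / (a - b * z)) {z | b * z < a} := by
  intro x hx y hy hxy
  change b * x < a at hx
  change b * y < a at hy
  rw [div_lt_div_iff₀ (by linarith) (by linarith)]
  linarith [mul_lt_mul_of_pos_left hxy ha]

/-- `w` plays the role of `ω_q` : on `(0,1]` it takes values in `[1, q/(q-1)]` and inverts
`H_q(z) = -(q-1)z^q + q z^{q-1}`. -/
theorem stmt16 (q : ℝ) (hq : 1 < q) (w : ℝ → ℝ)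
    (hw : ∀ s ∈ Ioc (0 : ℝ) 1, w s ∈ Icc 1 (q / (q - 1)) ∧
      -(q - 1) * (w s) ^ q + q * (w s) ^ (q - 1) = s) :
    StrictAntiOn (fun s : ℝ => (w s) ^ q / s - 1) (Ioc 0 1) ∧
    (w 1) ^ q / 1 - 1 = 0 ∧
    (∀ s ∈ Ioo (0 : ℝ) 1, 0 < (w s) ^ q / s - 1) := by
  have hH (s) (hs : s ∈ Ioc (0 : ℝ) 1) : Hq q (w s) = s := (hw s hs).2
  have hw_ge (s) (hs : s ∈ Ioc (0 : ℝ) 1) : 1 ≤ w s := (hw s hs).1.1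
  have hw_pos (s) (hs : s ∈ Ioc (0 : ℝ) 1) : 0 < w s := zero_lt_one.trans_le (hw_ge s hs)
  have hone : (1 : ℝ) ∈ Ioc 0 1 := ⟨zero_lt_one, le_rfl⟩
  have hw_anti : StrictAntiOn w (Ioc 0 1) := fun s hs t ht hst =>
    lt_of_not_ge fun h => hst.not_ge <| hH t ht ▸ hH s hs ▸
      (strictAntiOn_Hq hq).antitoneOn (hw_ge s hs) (hw_ge t ht) h
  have hden (s) (hs : s ∈ Ioc (0 : ℝ) 1) : (q - 1) * w s < q := by
    have hprod := hH s hs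
    rw [Hq_eq_rpow_mul (hw_pos s hs)] at hprod
    have := pos_of_mul_pos_right (hprod ▸ hs.1) (rpow_pos_of_pos (hw_pos s hs) _).le
    linarith
  have hα (s) (hs : s ∈ Ioc (0 : ℝ) 1) : w s ^ q / s = w s / (q - (q - 1) * w s) := by
    rw [← rpow_div_Hq (hw_pos s hs), hH s hs]
  have hw_one : w 1 = 1 :=
    (strictAntiOn_Hq hq).injOn (hw_ge 1 hone) (mem_Ici.2 le_rfl) (by rw [hH 1 hone, Hq_one])
  have hα_anti : StrictAntiOn (fun s : ℝ => (w s) ^ q / s - 1) (Ioc 0 1) := fun s hs t ht hst => by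
    simp only [hα s hs, hα t ht, sub_lt_sub_iff_right]
    exact strictMonoOn_div_sub_mul (by linarith) (hden t ht) (hden s hs) (hw_anti hs ht hst)
  have hα_one : (w 1) ^ q / 1 - 1 = 0 := by simp [hw_one]
  refine ⟨hα_anti, hα_one, fun s hs => ?_⟩
  simpa [hw_one] using hα_anti ⟨hs.1, hs.2.le⟩ hone hs.2
end
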